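/- arXiv:2408.06191 — 4 statements merged into one kernel-verified Lean document; each statement's English description precedes it below -/
import Mathlib

section
/- For all a, b, c ≥ 1 and invariant functions f ∈ C_a, g ∈ C_b, h ∈ C_c, Harish-Chandra induction is associative: R^{a+b+c}_{a+b,c}((R^{a+b}_{a,b}(f ⊠ g)) ⊠ h) = R^{a+b+c}_{a,b+c}(f ⊠ (R^{b+c}_{b,c}(g ⊠ h))), where f ⊠ g denotes the function (x,y) ↦ f(x)·g(y). -/
open Matrix BigOperators

namespace HCPaper

open scoped Classical

/-- `gl F n` : the additive group of `n × n` matrices over `F`. -/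
abbrev gl (F : Type) (n : ℕ) := Matrix (Fin n) (Fin n) F

variable {F : Type} [Field F] [Fintype F] [DecidableEq F]

/-- Conjugation (adjoint) action of `GL_n(F)` on `gl_n(F)`. -/
def conjM {n : ℕ} (g : Matrix.GeneralLinearGroup (Fin n) F) (x : gl F n) : gl F n :=
  (g : Matrix (Fin n) (Fin n) F) * x * ((g⁻¹ : Matrix.GeneralLinearGroup (Fin n) F) : Matrix (Fin n) (Fin n) F)

/-- A function `f : gl_n(F) → ℂ` is invariant if it is constant on `GL_n(F)`-conjugacy orbits. -/
def Invariant (n : ℕ) (f : gl F n → ℂ) : Prop :=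
  ∀ (g : Matrix.GeneralLinearGroup (Fin n) F) (x : gl F n), f (conjM g x) = f x

/-- Invariance for functions on `gl_k(F) × gl_l(F)` under `GL_k(F) × GL_l(F)`. -/
def Invariant₂ (k l : ℕ) (h : gl F k × gl F l → ℂ) : Prop :=
  ∀ (g₁ : Matrix.GeneralLinearGroup (Fin k) F) (g₂ : Matrix.GeneralLinearGroup (Fin l) F)
    (x : gl F k) (y : gl F l), h (conjM g₁ x, conjM g₂ y) = h (x, y)

/-- Transport of matrices along an equality of sizes. -/
def castM {m n : ℕ} (h : m = n) (x : gl F m) : gl F n :=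
  Matrix.reindex (finCongr h) (finCongr h) x

/-- Transport of functions along an equality of sizes. -/
def castFun {m n : ℕ} (h : m = n) (f : gl F m → ℂ) : gl F n → ℂ :=
  fun x => f (castM h.symm x)

/-- The block upper-triangular matrix `[x u; 0 y]`, viewed in `gl_{k+l}(F)`. -/
def but (k l : ℕ) (x : gl F k) (u : Matrix (Fin k) (Fin l) F) (y : gl F l) : gl F (k + l) :=
  Matrix.reindex finSumFinEquiv finSumFinEquiv (Matrix.fromBlocks x u 0 y)

/-- The block lower-triangular matrix `[x 0; v y]`, viewed in `gl_{k+l}(F)`. -/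
def blt (k l : ℕ) (x : gl F k) (v : Matrix (Fin l) (Fin k) F) (y : gl F l) : gl F (k + l) :=
  Matrix.reindex finSumFinEquiv finSumFinEquiv (Matrix.fromBlocks x 0 v y)

/-- View a matrix in `gl_{k+l}(F)` as a `2 × 2`-block matrix. -/
def blk (k l : ℕ) (m : gl F (k + l)) : Matrix (Fin k ⊕ Fin l) (Fin k ⊕ Fin l) F :=
  Matrix.reindex finSumFinEquiv.symm finSumFinEquiv.symm m

/-- Membership in `P_{k,l}` : being block upper triangular with blocks of sizes `k, l`. -/
def IsBUT (k l : ℕ) (m : gl F (k + l)) : Prop := Matrix.toBlocks₂₁ (blk k l m) = 0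

/-- The projection `π : P_{k,l} → gl_k(F) × gl_l(F)` deleting the off-diagonal block. -/
def proj (k l : ℕ) (m : gl F (k + l)) : gl F k × gl F l :=
  (Matrix.toBlocks₁₁ (blk k l m), Matrix.toBlocks₂₂ (blk k l m))

/-- The order of the group `P^×_{k,l}` of invertible block upper-triangular matrices. -/
noncomputable def Pcard (F : Type) [Field F] [Fintype F] [DecidableEq F] (k l : ℕ) : ℕ :=
  Nat.card {g : Matrix.GeneralLinearGroup (Fin (k + l)) F //
    IsBUT k l (g : Matrix (Fin (k + l)) (Fin (k + l)) F)}

/-- Harish-Chandra restriction `*R^{k+l}_{k,l}`; by convention it is the identity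
(under the canonical identifications) when `k = 0` or `l = 0`. -/
noncomputable def HCres (k l : ℕ) (f : gl F (k + l) → ℂ) : gl F k × gl F l → ℂ :=
  if hk : k = 0 then fun p => f (castM (by omega) p.2)
  else if hl : l = 0 then fun p => f (castM (by omega) p.1)
  else fun p =>
    ((Fintype.card F : ℂ) ^ (k * l))⁻¹ * ∑ u : Matrix (Fin k) (Fin l) F, f (but k l p.1 u p.2)

/-- Harish-Chandra induction `R^{k+l}_{k,l}`; by convention it is the identity
(under the canonical identifications) when `k = 0` or `l = 0`. -/
noncomputable def HCind (k l : ℕ) (h : gl F k × gl F l → ℂ) : gl F (k + l) → ℂ :=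
  if hk : k = 0 then fun z => h (0, castM (by omega) z)
  else if hl : l = 0 then fun z => h (castM (by omega) z, 0)
  else fun z =>
    ((Pcard F k l : ℂ))⁻¹ *
      ∑ g : Matrix.GeneralLinearGroup (Fin (k + l)) F,
        if IsBUT k l (conjM g z) then h (proj k l (conjM g z)) else 0

/-- The hermitian inner product on `C_n`. -/
noncomputable def inn (n : ℕ) (f g : gl F n → ℂ) : ℂ :=
  ((Fintype.card (Matrix.GeneralLinearGroup (Fin n) F) : ℂ))⁻¹ *
    ∑ x : gl F n, f x * (starRingEnd ℂ) (g x)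

/-- The hermitian inner product on invariant functions on `gl_k(F) × gl_l(F)`. -/
noncomputable def inn₂ (k l : ℕ) (f g : gl F k × gl F l → ℂ) : ℂ :=
  ((Fintype.card (Matrix.GeneralLinearGroup (Fin k) F) *
      Fintype.card (Matrix.GeneralLinearGroup (Fin l) F) : ℂ))⁻¹ *
    ∑ p : gl F k × gl F l, f p * (starRingEnd ℂ) (g p)

/-- `f ∈ C_n` is pre-cuspidal if all proper Harish-Chandra restrictions of `f` vanish. -/
def PreCuspidal (n : ℕ) (f : gl F n → ℂ) : Prop :=
  ∀ (k l : ℕ), 1 ≤ k → 1 ≤ l → ∀ hkl : k + l = n, HCres k l (castFun hkl.symm f) = 0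

/-- The composite `R_{(n_1,…,n_r)} ∘ *R_{(n_1,…,n_r)}` of the iterated two-block
Harish-Chandra induction and restriction along the composition `(n_1,…,n_r)`. -/
noncomputable def RcompRes : (L : List ℕ) → (gl F L.sum → ℂ) → gl F L.sum → ℂ
  | [], f => f
  | (k :: L), f =>
      castFun (List.sum_cons).symm
        (HCind k L.sum fun p =>
          RcompRes L (fun y => HCres k L.sum (castFun List.sum_cons f) (p.1, y)) p.2)

/-- The duality operation `𝒟_n(f) = Σ_{(n_1,…,n_r) ⊨ n} (-1)^{n-r}
R_{(n_1,…,n_r)}(*R_{(n_1,…,n_r)} f)`, the sum over all compositions of `n`. -/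
noncomputable def Dual (n : ℕ) (f : gl F n → ℂ) : gl F n → ℂ :=
  ∑ c : Composition n,
    ((-1 : ℂ)) ^ (n - c.length) •
      castFun c.blocks_sum (RcompRes c.blocks (castFun c.blocks_sum.symm f))

/-- `C_n`, the subspace of invariant functions, as a `ℂ`-submodule of all functions. -/
noncomputable def InvSub (F : Type) [Field F] (n : ℕ) : Submodule ℂ (gl F n → ℂ) where
  carrier := {f | Invariant n f}
  add_mem' := by
    intro a b ha hb g x
    simp only [Pi.add_apply]
    rw [ha g x, hb g x]
  zero_mem' := by intro g x; rfl
  smul_mem' := by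
    intro c f hf g x
    simp only [Pi.smul_apply]
    rw [hf g x]

/-- `χ` is the character of a finite-dimensional complex representation of the
additive group `gl_n(F)`. -/
def IsChar (n : ℕ) (χ : gl F n → ℂ) : Prop :=
  ∃ V : FDRep ℂ (Multiplicative (gl F n)),
    ∀ x : gl F n, FDRep.character V (Multiplicative.ofAdd x) = χ x

/-- An invariant character of `gl_n(F)`. -/
def IsInvChar (n : ℕ) (χ : gl F n → ℂ) : Prop := IsChar n χ ∧ Invariant n χ

/-- A character of the additive group `gl_k(F) × gl_l(F)`. -/
def IsChar₂ (k l : ℕ) (χ : gl F k × gl F l → ℂ) : Prop :=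
  ∃ V : FDRep ℂ (Multiplicative (gl F k × gl F l)),
    ∀ p : gl F k × gl F l, FDRep.character V (Multiplicative.ofAdd p) = χ p

/-- An invariant character of `gl_k(F) × gl_l(F)`. -/
def IsInvChar₂ (k l : ℕ) (χ : gl F k × gl F l → ℂ) : Prop := IsChar₂ k l χ ∧ Invariant₂ k l χ

/-- An irreducible invariant character: a nonzero invariant character which is not
the sum of two nonzero invariant characters. -/
def IrrInvChar (n : ℕ) (χ : gl F n → ℂ) : Prop :=
  IsInvChar n χ ∧ χ ≠ 0 ∧
    ¬ ∃ χ₁ χ₂ : gl F n → ℂ, IsInvChar n χ₁ ∧ IsInvChar n χ₂ ∧ χ₁ ≠ 0 ∧ χ₂ ≠ 0 ∧ χ = χ₁ + χ₂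

end HCPaper

/-!
Unfolded, `R_{a+b,c}((R_{a,b}(f ⊠ g)) ⊠ h)` is a double average, over `GL_{a+b+c}` and over the
Levi factor `GL_{a+b}`, of `f ⊠ g ⊠ h` composed with the block projections. Twisting the argument of
`R_{k,l}` by conjugation with `GL_k × GL_l` does not change it (reindex the sum over `GL_{k+l}` by
the block-diagonal element), so the inner average collapses to `|GL_{a+b}|` times the inflation of
`f ⊠ g`. Both sides thereby become multiples of the average over `GL_n` of one function,
`z ↦ f(z₁₁) g(z₂₂) h(z₃₃)` on the matrices that are block upper triangular for `(a, b, c)` and `0`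
elsewhere; the two multiples agree because `|P^×_{k,l}| = |GL_k| |GL_l| q^{kl}`.
-/

namespace HCPaper

open scoped Classical

section Blocks

variable {F : Type} [Field F] {k l : ℕ}

lemma conjM_mul {n : ℕ} (u v : GL (Fin n) F) (z : gl F n) :
    conjM (u * v) z = conjM u (conjM v z) := by
  simp [conjM, Matrix.mul_assoc]

lemma conjM_one {n : ℕ} (z : gl F n) : conjM (1 : GL (Fin n) F) z = z := by
  simp [conjM]

lemma but_mul (x x' : gl F k) (u u' : Matrix (Fin k) (Fin l) F) (y y' : gl F l) :
    but k l x u y * but k l x' u' y' = but k l (x * x') (x * u' + u * y') (y * y') := by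
  simp [but, Matrix.submatrix_mul_equiv, Matrix.fromBlocks_multiply]

lemma but_one : but k l (1 : gl F k) 0 (1 : gl F l) = 1 := by
  simp [but]

lemma blk_mul (m m' : gl F (k + l)) : blk k l (m * m') = blk k l m * blk k l m' := by
  simp [blk, Matrix.submatrix_mul_equiv]

lemma blk_but (x : gl F k) (u : Matrix (Fin k) (Fin l) F) (y : gl F l) :
    blk k l (but k l x u y) = Matrix.fromBlocks x u 0 y := by
  simp [blk, but]

lemma but_blk {m : gl F (k + l)} (hm : IsBUT k l m) :
    but k l (proj k l m).1 (Matrix.toBlocks₁₂ (blk k l m)) (proj k l m).2 = m := by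
  rw [but, proj, ← hm, Matrix.fromBlocks_toBlocks]
  simp [blk]

lemma isBUT_but (x : gl F k) (u : Matrix (Fin k) (Fin l) F) (y : gl F l) :
    IsBUT k l (but k l x u y) := by
  rw [IsBUT, blk_but, Matrix.toBlocks_fromBlocks₂₁]

lemma proj_but (x : gl F k) (u : Matrix (Fin k) (Fin l) F) (y : gl F l) :
    proj k l (but k l x u y) = (x, y) := by
  simp [proj, blk_but]

def butUnit (A : GL (Fin k) F) (B : GL (Fin l) F) (u : Matrix (Fin k) (Fin l) F) :
    GL (Fin (k + l)) F where
  val := but k l A u B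
  inv := but k l (↑A⁻¹ : gl F k) (-((↑A⁻¹ : gl F k) * u * (↑B⁻¹ : gl F l))) (↑B⁻¹ : gl F l)
  val_inv := by
    rw [but_mul, Matrix.mul_neg, ← Matrix.mul_assoc, ← Matrix.mul_assoc]
    simp [but_one]
  inv_val := by
    rw [but_mul, Matrix.neg_mul, Matrix.mul_assoc _ _ (B : gl F l)]
    simp [but_one]

@[simp]
lemma butUnit_val (A : GL (Fin k) F) (B : GL (Fin l) F) (u : Matrix (Fin k) (Fin l) F) :
    (butUnit A B u : gl F (k + l)) = but k l A u B := rfl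

lemma butUnit_inv_val (A : GL (Fin k) F) (B : GL (Fin l) F) :
    ((butUnit A B 0)⁻¹ : GL (Fin (k + l)) F) = but k l (↑A⁻¹ : gl F k) 0 (↑B⁻¹ : gl F l) := by
  change but k l _ _ _ = _
  simp

lemma blk_conjM_butUnit (A : GL (Fin k) F) (B : GL (Fin l) F) (m : gl F (k + l)) :
    blk k l (conjM (butUnit A B 0) m) =
      Matrix.fromBlocks
        ((A : gl F k) * (blk k l m).toBlocks₁₁ * (↑A⁻¹ : gl F k))
        ((A : gl F k) * (blk k l m).toBlocks₁₂ * (↑B⁻¹ : gl F l))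
        ((B : gl F l) * (blk k l m).toBlocks₂₁ * (↑A⁻¹ : gl F k))
        ((B : gl F l) * (blk k l m).toBlocks₂₂ * (↑B⁻¹ : gl F l)) := by
  rw [conjM, butUnit_val, butUnit_inv_val, blk_mul, blk_mul, blk_but, blk_but,
    ← Matrix.fromBlocks_toBlocks (blk k l m)]
  simp [Matrix.fromBlocks_multiply, Matrix.mul_assoc]

lemma proj_conjM_butUnit (A : GL (Fin k) F) (B : GL (Fin l) F) (m : gl F (k + l)) :
    proj k l (conjM (butUnit A B 0) m) = (conjM A (proj k l m).1, conjM B (proj k l m).2) := by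
  simp only [proj, blk_conjM_butUnit, Matrix.toBlocks_fromBlocks₁₁, Matrix.toBlocks_fromBlocks₂₂]
  rfl

lemma isBUT_conjM_butUnit (A : GL (Fin k) F) (B : GL (Fin l) F) (m : gl F (k + l)) :
    IsBUT k l (conjM (butUnit A B 0) m) ↔ IsBUT k l m := by
  rw [IsBUT, IsBUT, blk_conjM_butUnit, Matrix.toBlocks_fromBlocks₂₁]
  constructor
  · intro h
    simpa [Matrix.mul_assoc] using congr((↑B⁻¹ : gl F l) * $h * (A : gl F k))
  · intro h
    simp [h]

end Blocks

section Card

variable {F : Type} [Field F] {k l : ℕ}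

lemma det_of_isBUT {m : gl F (k + l)} (hm : IsBUT k l m) :
    m.det = (proj k l m).1.det * (proj k l m).2.det := by
  conv_lhs => rw [← but_blk hm]
  rw [but, Matrix.det_reindex_self, Matrix.det_fromBlocks_zero₂₁]

lemma isUnit_proj_of_isBUT (g : GL (Fin (k + l)) F) (hg : IsBUT k l (g : gl F (k + l))) :
    IsUnit (proj k l (g : gl F (k + l))).1 ∧ IsUnit (proj k l (g : gl F (k + l))).2 := by
  simpa [Matrix.isUnit_iff_isUnit_det (proj k l _).1, Matrix.isUnit_iff_isUnit_det (proj k l _).2,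
    det_of_isBUT hg] using (Matrix.isUnit_iff_isUnit_det _).mp g.isUnit

noncomputable def parabolicEquiv :
    {g : GL (Fin (k + l)) F // IsBUT k l (g : gl F (k + l))} ≃
      (GL (Fin k) F × GL (Fin l) F) × Matrix (Fin k) (Fin l) F where
  toFun g :=
    (((isUnit_proj_of_isBUT g.1 g.2).1.unit, (isUnit_proj_of_isBUT g.1 g.2).2.unit),
      (blk k l (g.1 : gl F (k + l))).toBlocks₁₂)
  invFun p := ⟨butUnit p.1.1 p.1.2 p.2, isBUT_but _ _ _⟩
  left_inv g := Subtype.ext <| Units.ext <| but_blk g.2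
  right_inv := by
    rintro ⟨⟨A, B⟩, u⟩
    ext : 2
    · exact Units.ext (by simp [proj_but])
    · exact Units.ext (by simp [proj_but])
    · simp [blk_but]

variable [Fintype F] [DecidableEq F]

lemma Pcard_eq (k l : ℕ) :
    Pcard F k l = Nat.card (GL (Fin k) F) * Nat.card (GL (Fin l) F) * Nat.card F ^ (k * l) := by
  rw [Pcard, Nat.card_congr parabolicEquiv]
  simp [Matrix, ← pow_mul, mul_comm]

lemma card_div_Pcard_assoc (a b c : ℕ) :
    (Nat.card (GL (Fin (a + b)) F) : ℂ) / Pcard F a b * (Pcard F (a + b) c : ℂ)⁻¹ =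
      (Nat.card (GL (Fin (b + c)) F) : ℂ) / Pcard F b c * (Pcard F a (b + c) : ℂ)⁻¹ := by
  have hGL (n : ℕ) : (Nat.card (GL (Fin n) F) : ℂ) ≠ 0 := by simp
  have hq : (Nat.card F : ℂ) ≠ 0 := by simp
  simp only [Pcard_eq, Nat.cast_mul, Nat.cast_pow]
  field_simp
  ring

end Card

section Induction

variable {F : Type} [Field F] {a b c k l : ℕ}

noncomputable def inflate (k l : ℕ) (ψ : gl F k × gl F l → ℂ) (m : gl F (k + l)) : ℂ :=
  if IsBUT k l m then ψ (proj k l m) else 0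

lemma inflate_conj (A : GL (Fin k) F) (B : GL (Fin l) F) (ψ : gl F k × gl F l → ℂ)
    (m : gl F (k + l)) :
    inflate k l (fun p => ψ (conjM A p.1, conjM B p.2)) m =
      inflate k l ψ (conjM (butUnit A B 0) m) := by
  simp [inflate, isBUT_conjM_butUnit, proj_conjM_butUnit]

variable [Fintype F] [DecidableEq F]

lemma HCind_eq_sum (hk : k ≠ 0) (hl : l ≠ 0) (ψ : gl F k × gl F l → ℂ) (z : gl F (k + l)) :
    HCind k l ψ z = (Pcard F k l : ℂ)⁻¹ * ∑ g : GL (Fin (k + l)) F, inflate k l ψ (conjM g z) := by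
  rw [HCind, dif_neg hk, dif_neg hl]
  rfl

noncomputable def HCindLinearMap (k l : ℕ) :
    (gl F k × gl F l → ℂ) →ₗ[ℂ] (gl F (k + l) → ℂ) where
  toFun := HCind k l
  map_add' φ ψ := by
    unfold HCind
    split_ifs <;> funext z <;> simp [ite_add_zero, Finset.sum_add_distrib, mul_add]
  map_smul' c ψ := by
    unfold HCind
    split_ifs <;> funext z <;> simp [Finset.mul_sum, mul_left_comm]

lemma HCind_smul (r : ℂ) (ψ : gl F k × gl F l → ℂ) : HCind k l (r • ψ) = r • HCind k l ψ :=
  (HCindLinearMap k l).map_smul r ψ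

lemma HCind_sum {ι : Type*} (s : Finset ι) (ψ : ι → gl F k × gl F l → ℂ) :
    HCind k l (∑ i ∈ s, ψ i) = ∑ i ∈ s, HCind k l (ψ i) :=
  map_sum (HCindLinearMap k l) ψ s

lemma HCind_conj (hk : k ≠ 0) (hl : l ≠ 0) (A : GL (Fin k) F) (B : GL (Fin l) F)
    (ψ : gl F k × gl F l → ℂ) :
    HCind k l (fun p => ψ (conjM A p.1, conjM B p.2)) = HCind k l ψ := by
  funext z
  simp only [HCind_eq_sum hk hl, inflate_conj, ← conjM_mul]
  congr 1
  exact Fintype.sum_equiv (Equiv.mulLeft (butUnit A B 0)) _ _ fun _ => rfl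

lemma HCind_sum_conj_fst (hk : k ≠ 0) (hl : l ≠ 0) (Φ : gl F k × gl F l → ℂ) :
    HCind k l (fun p => ∑ A : GL (Fin k) F, Φ (conjM A p.1, p.2)) =
      (Nat.card (GL (Fin k) F) : ℂ) • HCind k l Φ := by
  have hconj (A : GL (Fin k) F) : HCind k l (fun p => Φ (conjM A p.1, p.2)) = HCind k l Φ := by
    simpa only [conjM_one] using HCind_conj hk hl A 1 Φ
  have := HCind_sum Finset.univ (fun A p => Φ (conjM A p.1, p.2))
  simp only [hconj] at this
  simp [← Finset.sum_fn, this, Nat.card_eq_fintype_card, Nat.cast_smul_eq_nsmul]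

lemma HCind_sum_conj_snd (hk : k ≠ 0) (hl : l ≠ 0) (Φ : gl F k × gl F l → ℂ) :
    HCind k l (fun p => ∑ B : GL (Fin l) F, Φ (p.1, conjM B p.2)) =
      (Nat.card (GL (Fin l) F) : ℂ) • HCind k l Φ := by
  have hconj (B : GL (Fin l) F) : HCind k l (fun p => Φ (p.1, conjM B p.2)) = HCind k l Φ := by
    simpa only [conjM_one] using HCind_conj hk hl 1 B Φ
  have := HCind_sum Finset.univ (fun B p => Φ (p.1, conjM B p.2))
  simp only [hconj] at this
  simp [← Finset.sum_fn, this, Nat.card_eq_fintype_card, Nat.cast_smul_eq_nsmul]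

lemma HCind_HCind_mul (ha : a ≠ 0) (hb : b ≠ 0) (hc : c ≠ 0) (ψ : gl F a × gl F b → ℂ)
    (h : gl F c → ℂ) :
    HCind (a + b) c (fun p => HCind a b ψ p.1 * h p.2) =
      ((Nat.card (GL (Fin (a + b)) F) : ℂ) / Pcard F a b) •
        HCind (a + b) c (fun p => inflate a b ψ p.1 * h p.2) := by
  have hsum : (fun p : gl F (a + b) × gl F c => HCind a b ψ p.1 * h p.2) =
      (Pcard F a b : ℂ)⁻¹ •
        fun p => ∑ A : GL (Fin (a + b)) F, inflate a b ψ (conjM A p.1) * h p.2 := by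
    funext p
    simp [HCind_eq_sum ha hb, Finset.sum_mul, mul_assoc]
  rw [hsum, HCind_smul, HCind_sum_conj_fst (by omega) hc (fun q => inflate a b ψ q.1 * h q.2),
    smul_smul, inv_mul_eq_div]

lemma HCind_mul_HCind (ha : a ≠ 0) (hb : b ≠ 0) (hc : c ≠ 0) (f : gl F a → ℂ)
    (ψ : gl F b × gl F c → ℂ) :
    HCind a (b + c) (fun p => f p.1 * HCind b c ψ p.2) =
      ((Nat.card (GL (Fin (b + c)) F) : ℂ) / Pcard F b c) •
        HCind a (b + c) (fun p => f p.1 * inflate b c ψ p.2) := by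
  have hsum : (fun p : gl F a × gl F (b + c) => f p.1 * HCind b c ψ p.2) =
      (Pcard F b c : ℂ)⁻¹ •
        fun p => ∑ B : GL (Fin (b + c)) F, f p.1 * inflate b c ψ (conjM B p.2) := by
    funext p
    simp [HCind_eq_sum hb hc, Finset.mul_sum, mul_left_comm]
  rw [hsum, HCind_smul, HCind_sum_conj_snd ha (by omega) (fun q => f q.1 * inflate b c ψ q.2),
    smul_smul, inv_mul_eq_div]

end Induction

section Assoc

variable {F : Type} {a b c k l : ℕ}

lemma castM_apply {m n : ℕ} (h : m = n) (x : gl F m) (i j : Fin n) :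
    castM h x i j = x (Fin.cast h.symm i) (Fin.cast h.symm j) := rfl

lemma castM_castM_symm {m n : ℕ} (h : m = n) (x : gl F n) : castM h (castM h.symm x) = x := rfl

lemma proj_fst_apply (m : gl F (k + l)) (i j : Fin k) :
    (proj k l m).1 i j = m (Fin.castAdd l i) (Fin.castAdd l j) := rfl

lemma proj_snd_apply (m : gl F (k + l)) (i j : Fin l) :
    (proj k l m).2 i j = m (Fin.natAdd k i) (Fin.natAdd k j) := rfl

lemma proj_assoc_fst (m : gl F (a + b + c)) :
    (proj a b (proj (a + b) c m).1).1 = (proj a (b + c) (castM (Nat.add_assoc a b c) m)).1 := by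
  ext i j
  simp [proj_fst_apply, castM_apply, Fin.castAdd_castAdd]

lemma proj_assoc_snd_fst (m : gl F (a + b + c)) :
    (proj a b (proj (a + b) c m).1).2 =
      (proj b c (proj a (b + c) (castM (Nat.add_assoc a b c) m)).2).1 := by
  ext i j
  simp [proj_fst_apply, proj_snd_apply, castM_apply, Fin.castAdd_natAdd]

lemma proj_assoc_snd_snd (m : gl F (a + b + c)) :
    (proj (a + b) c m).2 = (proj b c (proj a (b + c) (castM (Nat.add_assoc a b c) m)).2).2 := by
  ext i j
  simp [proj_snd_apply, castM_apply, Fin.natAdd_natAdd]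

variable [Field F]

lemma isBUT_iff (m : gl F (k + l)) :
    IsBUT k l m ↔ ∀ (i : Fin l) (j : Fin k), m (Fin.natAdd k i) (Fin.castAdd l j) = 0 := by
  rw [IsBUT, ← Matrix.ext_iff]
  rfl

lemma isBUT_assoc (m : gl F (a + b + c)) :
    (IsBUT (a + b) c m ∧ IsBUT a b (proj (a + b) c m).1) ↔
      (IsBUT a (b + c) (castM (Nat.add_assoc a b c) m) ∧
        IsBUT b c (proj a (b + c) (castM (Nat.add_assoc a b c) m)).2) := by
  simp only [isBUT_iff, proj_fst_apply, proj_snd_apply, castM_apply, Fin.forall_fin_add,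
    forall_and, Fin.castAdd_castAdd, Fin.castAdd_natAdd, Fin.natAdd_natAdd, Fin.cast_cast]
  tauto

lemma inflate_assoc (f : gl F a → ℂ) (g : gl F b → ℂ) (h : gl F c → ℂ) (m : gl F (a + b + c)) :
    inflate (a + b) c (fun p => inflate a b (fun r => f r.1 * g r.2) p.1 * h p.2) m =
      inflate a (b + c) (fun p => f p.1 * inflate b c (fun r => g r.1 * h r.2) p.2)
        (castM (Nat.add_assoc a b c) m) := by
  simp only [inflate, ite_mul, zero_mul, mul_ite, mul_zero, ← ite_and]
  rw [proj_assoc_fst, proj_assoc_snd_fst, proj_assoc_snd_snd]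
  exact if_congr (isBUT_assoc m) (mul_assoc _ _ _) rfl

variable [Fintype F] [DecidableEq F]

lemma sum_conjM_castM {m n : ℕ} (e : m = n) (Ψ : gl F n → ℂ) (z : gl F m) :
    ∑ g : GL (Fin m) F, Ψ (castM e (conjM g z)) = ∑ g : GL (Fin n) F, Ψ (conjM g (castM e z)) := by
  subst e
  rfl

end Assoc

theorem HCind_assoc_general (F : Type) [Field F] [Fintype F] [DecidableEq F]
    (a b c : ℕ) (ha : 1 ≤ a) (hb : 1 ≤ b) (hc : 1 ≤ c)
    (f : gl F a → ℂ) (g : gl F b → ℂ) (h : gl F c → ℂ) :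
    castFun (Nat.add_assoc a b c)
      (HCind (a + b) c fun p => HCind a b (fun r => f r.1 * g r.2) p.1 * h p.2) =
    HCind a (b + c) fun p => f p.1 * HCind b c (fun r => g r.1 * h r.2) p.2 := by
  replace ha : a ≠ 0 := by omega
  replace hb : b ≠ 0 := by omega
  replace hc : c ≠ 0 := by omega
  funext z
  change HCind (a + b) c _ (castM (Nat.add_assoc a b c).symm z) = _
  rw [HCind_HCind_mul ha hb hc, HCind_mul_HCind ha hb hc, Pi.smul_apply, Pi.smul_apply,
    HCind_eq_sum (by omega) hc, HCind_eq_sum ha (by omega)]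
  simp only [inflate_assoc]
  rw [sum_conjM_castM, castM_castM_symm, smul_eq_mul, smul_eq_mul, ← mul_assoc, ← mul_assoc,
    card_div_Pcard_assoc]

/-- Harish-Chandra induction is associative. -/
theorem HCind_assoc (F : Type) [Field F] [Fintype F] [DecidableEq F]
    (a b c : ℕ) (ha : 1 ≤ a) (hb : 1 ≤ b) (hc : 1 ≤ c)
    (f : gl F a → ℂ) (g : gl F b → ℂ) (h : gl F c → ℂ)
    (hf : Invariant a f) (hg : Invariant b g) (hh : Invariant c h) :
    castFun (Nat.add_assoc a b c)
      (HCind (a + b) c fun p => HCind a b (fun r => f r.1 * g r.2) p.1 * h p.2) =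
    HCind a (b + c) fun p => f p.1 * HCind b c (fun r => g r.1 * h r.2) p.2 :=
  HCind_assoc_general F a b c ha hb hc f g h

end HCPaper
end

section
/- For all a, b, c ≥ 1 and f ∈ C_{a+b+c}, Harish-Chandra restriction is coassociative: for all x ∈ gl_a(𝔽_q), y ∈ gl_b(𝔽_q), z ∈ gl_c(𝔽_q), applying *R^{a+b+c}_{a+b,c} to f and then *R^{a+b}_{a,b} in the first variable gives the same value at (x,y,z) as applying *R^{a+b+c}_{a,b+c} to f and then *R^{b+c}_{b,c} in the second variable; explicitly, q^{-ab} Σ_{v ∈ Mat_{a×b}(𝔽_q)} (*R^{a+b+c}_{a+b,c} f)([x v; 0 y], z) = q^{-bc} Σ_{w ∈ Mat_{b×c}(𝔽_q)} (*R^{a+b+c}_{a,b+c} f)(x, [y w; 0 z]). -/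
/-! Both sides equal `q^{-(ab+ac+bc)}` times the sum of `f` over all block upper-triangular
matrices `[x v u₁; 0 y u₂; 0 0 z]`: an `(a+b) × c` block splits into its rows `u₁, u₂`, an
`a × (b+c)` block into its columns `v, u₁`, and nesting the `2 × 2` block matrices either way
gives the same `3 × 3` block matrix. -/

open Matrix BigOperators

namespace HCPaper

open scoped Classical

variable {F : Type} [Field F] [Fintype F] [DecidableEq F]

section AppendMatrix

variable {ι κ α : Type*} {m n : ℕ}

def appendRows (u₁ : Matrix (Fin m) κ α) (u₂ : Matrix (Fin n) κ α) :
    Matrix (Fin (m + n)) κ α :=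
  Matrix.of (Fin.append (α := κ → α) u₁ u₂)

def appendCols (u₁ : Matrix ι (Fin m) α) (u₂ : Matrix ι (Fin n) α) :
    Matrix ι (Fin (m + n)) α :=
  Matrix.of fun i => Fin.append (u₁ i) (u₂ i)

@[simp]
lemma appendRows_castAdd (u₁ : Matrix (Fin m) κ α) (u₂ : Matrix (Fin n) κ α)
    (i : Fin m) (j : κ) :
    appendRows u₁ u₂ (i.castAdd n) j = u₁ i j :=
  congrFun (Fin.append_left (α := κ → α) u₁ u₂ i) j

@[simp]
lemma appendRows_natAdd (u₁ : Matrix (Fin m) κ α) (u₂ : Matrix (Fin n) κ α)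
    (i : Fin n) (j : κ) :
    appendRows u₁ u₂ (i.natAdd m) j = u₂ i j :=
  congrFun (Fin.append_right (α := κ → α) u₁ u₂ i) j

@[simp]
lemma appendCols_castAdd (u₁ : Matrix ι (Fin m) α) (u₂ : Matrix ι (Fin n) α)
    (i : ι) (j : Fin m) :
    appendCols u₁ u₂ i (j.castAdd n) = u₁ i j := by
  simp [appendCols]

@[simp]
lemma appendCols_natAdd (u₁ : Matrix ι (Fin m) α) (u₂ : Matrix ι (Fin n) α)
    (i : ι) (j : Fin n) :
    appendCols u₁ u₂ i (j.natAdd m) = u₂ i j := by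
  simp [appendCols]

variable {M : Type*} [AddCommMonoid M] [Fintype α]

lemma sum_appendRows [Fintype κ] [DecidableEq κ] (g : Matrix (Fin (m + n)) κ α → M) :
    ∑ u, g u =
      ∑ u₁ : Matrix (Fin m) κ α, ∑ u₂ : Matrix (Fin n) κ α, g (appendRows u₁ u₂) := by
  rw [← Fintype.sum_prod_type']
  exact (Fintype.sum_equiv (Fin.appendEquiv m n) _ _ fun _ => rfl).symm

lemma sum_appendCols [Fintype ι] [DecidableEq ι] (g : Matrix ι (Fin (m + n)) α → M) :
    ∑ u, g u =
      ∑ u₁ : Matrix ι (Fin m) α, ∑ u₂ : Matrix ι (Fin n) α, g (appendCols u₁ u₂) := by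
  rw [← Fintype.sum_prod_type']
  exact (Fintype.sum_equiv ((Equiv.arrowProdEquivProdArrow _ _ _).symm.trans
    (Equiv.piCongrRight fun _ => Fin.appendEquiv m n)) _ _ fun _ => rfl).symm

end AppendMatrix

section BlockMatrix

variable {F : Type} [Field F] {k l : ℕ}
  (x : gl F k) (u : Matrix (Fin k) (Fin l) F) (y : gl F l)

@[simp]
lemma but_castAdd_castAdd (i j : Fin k) :
    but k l x u y (i.castAdd l) (j.castAdd l) = x i j := by
  simp [but]

@[simp]
lemma but_castAdd_natAdd (i : Fin k) (j : Fin l) :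
    but k l x u y (i.castAdd l) (j.natAdd k) = u i j := by
  simp [but]

@[simp]
lemma but_natAdd_castAdd (i : Fin l) (j : Fin k) :
    but k l x u y (i.natAdd k) (j.castAdd l) = 0 := by
  simp [but]

@[simp]
lemma but_natAdd_natAdd (i j : Fin l) :
    but k l x u y (i.natAdd k) (j.natAdd k) = y i j := by
  simp [but]

end BlockMatrix

lemma but_assoc {F : Type} [Field F] {a b c : ℕ}
    (x : gl F a) (y : gl F b) (z : gl F c) (v : Matrix (Fin a) (Fin b) F)
    (u₁ : Matrix (Fin a) (Fin c) F) (u₂ : Matrix (Fin b) (Fin c) F) :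
    but (a + b) c (but a b x v y) (appendRows u₁ u₂) z =
      castM (Nat.add_assoc a b c).symm
        (but a (b + c) x (appendCols v u₁) (but b c y u₂ z)) := by
  have h₁ (i : Fin a) : (Fin.castAdd c (Fin.castAdd b i)).cast (Nat.add_assoc a b c) =
      Fin.castAdd (b + c) i := rfl
  have h₂ (i : Fin b) : (Fin.castAdd c (Fin.natAdd a i)).cast (Nat.add_assoc a b c) =
      Fin.natAdd a (Fin.castAdd c i) := rfl
  have h₃ (i : Fin c) : (Fin.natAdd (a + b) i).cast (Nat.add_assoc a b c) =
      Fin.natAdd a (Fin.natAdd b i) := Fin.ext (Nat.add_assoc a b i)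
  ext i j
  refine Fin.addCases (Fin.addCases ?_ ?_) ?_ i <;> intro i <;>
    refine Fin.addCases (Fin.addCases ?_ ?_) ?_ j <;> intro j <;>
    simp [castM, h₁, h₂, h₃]

lemma HCres_of_ne_zero {F : Type} [Field F] [Fintype F] {k l : ℕ}
    (hk : k ≠ 0) (hl : l ≠ 0) (f : gl F (k + l) → ℂ) (p : gl F k × gl F l) :
    HCres k l f p =
      ((Fintype.card F : ℂ) ^ (k * l))⁻¹ *
        ∑ u : Matrix (Fin k) (Fin l) F, f (but k l p.1 u p.2) := by
  rw [HCres, dif_neg hk, dif_neg hl]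

theorem HCres_coassoc_general (F : Type) [Field F] [Fintype F]
    (a b c : ℕ) (ha : 1 ≤ a) (hb : 1 ≤ b) (hc : 1 ≤ c)
    (f : gl F (a + b + c) → ℂ)
    (x : gl F a) (y : gl F b) (z : gl F c) :
    ((Fintype.card F : ℂ) ^ (a * b))⁻¹ *
        ∑ v : Matrix (Fin a) (Fin b) F, HCres (a + b) c f (but a b x v y, z) =
      ((Fintype.card F : ℂ) ^ (b * c))⁻¹ *
        ∑ w : Matrix (Fin b) (Fin c) F,
          HCres a (b + c) (castFun (Nat.add_assoc a b c) f) (x, but b c y w z) := by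
  set q : ℂ := (Fintype.card F : ℂ)
  set S := ∑ v : Matrix (Fin a) (Fin b) F, ∑ u₁ : Matrix (Fin a) (Fin c) F,
    ∑ u₂ : Matrix (Fin b) (Fin c) F, f (but (a + b) c (but a b x v y) (appendRows u₁ u₂) z)
  have lhs : (q ^ (a * b))⁻¹ *
        ∑ v : Matrix (Fin a) (Fin b) F, HCres (a + b) c f (but a b x v y, z) =
      (q ^ (a * b + (a + b) * c))⁻¹ * S := by
    simp_rw [HCres_of_ne_zero (by omega : a + b ≠ 0) (by omega : c ≠ 0), sum_appendRows,
      ← Finset.mul_sum, pow_add, mul_inv, mul_assoc]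
    rfl
  have rhs : (q ^ (b * c))⁻¹ * ∑ w : Matrix (Fin b) (Fin c) F,
        HCres a (b + c) (castFun (Nat.add_assoc a b c) f) (x, but b c y w z) =
      (q ^ (b * c + a * (b + c)))⁻¹ * S := by
    simp_rw [HCres_of_ne_zero (by omega : a ≠ 0) (by omega : b + c ≠ 0), sum_appendCols,
      castFun, ← but_assoc, ← Finset.mul_sum, pow_add, mul_inv, mul_assoc,
      Finset.sum_comm (γ := Matrix (Fin b) (Fin c) F)]
    rfl
  rw [lhs, rhs, show a * b + (a + b) * c = b * c + a * (b + c) by ring]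

/-- Harish-Chandra restriction is coassociative. -/
theorem HCres_coassoc (F : Type) [Field F] [Fintype F] [DecidableEq F]
    (a b c : ℕ) (ha : 1 ≤ a) (hb : 1 ≤ b) (hc : 1 ≤ c)
    (f : gl F (a + b + c) → ℂ) (hf : Invariant (a + b + c) f)
    (x : gl F a) (y : gl F b) (z : gl F c) :
    ((Fintype.card F : ℂ) ^ (a * b))⁻¹ *
        ∑ v : Matrix (Fin a) (Fin b) F, HCres (a + b) c f (but a b x v y, z) =
      ((Fintype.card F : ℂ) ^ (b * c))⁻¹ *
        ∑ w : Matrix (Fin b) (Fin c) F,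
          HCres a (b + c) (castFun (Nat.add_assoc a b c) f) (x, but b c y w z) :=
  HCres_coassoc_general F a b c ha hb hc f x y z

end HCPaper
end

section
/- The irreducible invariant characters of gl_n(𝔽_q) are pairwise orthogonal with respect to the inner product (·,·)_n and form a ℂ-basis of the space C_n of invariant functions. -/
open Matrix BigOperators

/-!
The additive characters `ψ` of the finite abelian group `A = gl_n(𝔽_q)` form a basis of all
functions `A → ℂ`, and the coefficient of the character `χ` of a representation `V` at `ψ` is
`⟪ψ, χ⟫ = dim Hom(ψ, V)`, a natural number. The coefficients of an invariant function are constant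
on the orbits of the contragredient action of `GL_n(𝔽_q)` on additive characters. Hence the invariant
characters are the `ℕ`-combinations of orbit sums, the irreducible ones are the orbit sums
themselves, and these are orthogonal (distinct orbits are disjoint) and span the invariant functions.
-/

namespace HCPaper

open scoped Classical
open RCLike MulAction

section DualAction

variable {A M G : Type*} [AddCommGroup A] [Monoid M] [Group G] [DistribMulAction G A]

instance : MulAction G (AddChar A M) where
  smul g ψ := ψ.compAddMonoidHom (DistribSMul.toAddMonoidHom A g⁻¹)
  one_smul ψ := by
    ext x
    show ψ ((1 : G)⁻¹ • x) = ψ x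
    rw [inv_one, one_smul]
  mul_smul g h ψ := by
    ext x
    show ψ ((g * h)⁻¹ • x) = ψ (h⁻¹ • g⁻¹ • x)
    rw [_root_.mul_inv_rev, mul_smul]

lemma smul_addChar_apply (g : G) (ψ : AddChar A M) (x : A) : (g • ψ) x = ψ (g⁻¹ • x) := rfl

end DualAction

section Characters

variable {A : Type} [AddCommGroup A]

def IsRepCharacter (χ : A → ℂ) : Prop :=
  ∃ V : FDRep ℂ (Multiplicative A), ∀ x : A, V.character (Multiplicative.ofAdd x) = χ x

noncomputable def diagonalRep {ι : Type} [Fintype ι] (ψ : ι → AddChar A ℂ) :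
    Representation ℂ (Multiplicative A) (ι → ℂ) :=
  ((Matrix.toLinAlgEquiv'.toAlgHom.comp (Matrix.diagonalAlgHom ℂ)).toMonoidHom).comp
    (MonoidHom.pi fun i => (ψ i).toMonoidHom)

lemma character_diagonalRep {ι : Type} [Fintype ι] (ψ : ι → AddChar A ℂ) (x : A) :
    (FDRep.of (diagonalRep ψ)).character (Multiplicative.ofAdd x) = ∑ i, ψ i x := by
  show LinearMap.trace ℂ (ι → ℂ) (Matrix.toLin' (Matrix.diagonal fun i => ψ i x)) = _
  rw [Matrix.trace_toLin'_eq, Matrix.trace_diagonal]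

lemma isRepCharacter_sum {ι : Type} [Fintype ι] (ψ : ι → AddChar A ℂ) :
    IsRepCharacter (∑ i, ⇑(ψ i)) :=
  ⟨FDRep.of (diagonalRep ψ), fun x => by rw [character_diagonalRep, Finset.sum_apply]⟩

variable [Fintype A]

lemma complexBasis_repr_apply (f : A → ℂ) (ψ : AddChar A ℂ) :
    (AddChar.complexBasis A).repr f ψ = ⟪(ψ : A → ℂ), f⟫ₙ_[ℂ] := by
  let L : (A → ℂ) →ₗ[ℂ] ℂ :=
    { toFun := fun f => ⟪(ψ : A → ℂ), f⟫ₙ_[ℂ]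
      map_add' := wInner_add_right _ _
      map_smul' := fun c f => wInner_smul_right c _ _ _ }
  suffices (AddChar.complexBasis A).coord ψ = L from LinearMap.congr_fun this f
  refine (AddChar.complexBasis A).ext fun φ => ?_
  rw [Module.Basis.coord_apply, Module.Basis.repr_self, Finsupp.single_apply]
  simp [L, AddChar.wInner_cWeight_eq_boole, eq_comm]

lemma exists_complexBasis_repr_ne_zero {f : A → ℂ} (hf : f ≠ 0) :
    ∃ ψ, (AddChar.complexBasis A).repr f ψ ≠ 0 :=
  DFunLike.ne_iff.1 ((AddChar.complexBasis A).repr.map_ne_zero_iff.2 hf)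

lemma isRepCharacter_of_repr_eq_natCast {χ : A → ℂ}
    (h : ∀ ψ, ∃ m : ℕ, (AddChar.complexBasis A).repr χ ψ = m) : IsRepCharacter χ := by
  choose m hm using h
  have hχ : χ = ∑ i : Σ ψ, Fin (m ψ), ⇑i.1 := by
    conv_lhs => rw [← (AddChar.complexBasis A).sum_repr χ]
    rw [Fintype.sum_sigma]
    refine Finset.sum_congr rfl fun ψ _ => ?_
    simp only [hm, AddChar.complexBasis_apply, Finset.sum_const, Finset.card_univ,
      Fintype.card_fin, Nat.cast_smul_eq_nsmul]
  rw [hχ]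
  exact isRepCharacter_sum _

/-- The coefficient is the multiplicity `dim Hom(ψ, V)` of `ψ` in `V`. -/
lemma exists_repr_eq_natCast {χ : A → ℂ} (hχ : IsRepCharacter χ) (ψ : AddChar A ℂ) :
    ∃ m : ℕ, (AddChar.complexBasis A).repr χ ψ = m := by
  obtain ⟨W, hW⟩ := hχ
  have : Invertible (Nat.card (Multiplicative A) : ℂ) := invertibleOfNonzero (by simp)
  refine ⟨Module.finrank ℂ (FDRep.of (diagonalRep fun _ : Unit => ψ) ⟶ W), ?_⟩
  rw [← FDRep.scalar_product_char_eq_finrank_equivariant, complexBasis_repr_apply, wInner,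
    Finset.mul_sum]
  refine Fintype.sum_equiv Multiplicative.ofAdd _ _ fun x => ?_
  rw [← ofAdd_neg, character_diagonalRep, hW]
  simp [AddChar.map_neg_eq_conj, Complex.real_smul]

end Characters

section InvariantCharacters

variable {A : Type} [AddCommGroup A] [Fintype A]
variable (G : Type*) [Group G] [DistribMulAction G A]

def IsInvariant (f : A → ℂ) : Prop := ∀ (g : G) (x : A), f (g • x) = f x

def IsInvCharacter (χ : A → ℂ) : Prop := IsRepCharacter χ ∧ IsInvariant G χ

def IsIrrInvCharacter (χ : A → ℂ) : Prop :=
  IsInvCharacter G χ ∧ χ ≠ 0 ∧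
    ¬ ∃ χ₁ χ₂ : A → ℂ, IsInvCharacter G χ₁ ∧ IsInvCharacter G χ₂ ∧ χ₁ ≠ 0 ∧ χ₂ ≠ 0 ∧ χ = χ₁ + χ₂

def invariantSubmodule : Submodule ℂ (A → ℂ) where
  carrier := {f | IsInvariant G f}
  add_mem' hf hg g x := by simp only [Pi.add_apply, hf g x, hg g x]
  zero_mem' _ _ := rfl
  smul_mem' c f hf g x := by simp only [Pi.smul_apply, hf g x]

noncomputable def orbitSum (O : orbitRel.Quotient G (AddChar A ℂ)) : A → ℂ :=
  ∑ ψ with (⟦ψ⟧ : orbitRel.Quotient G (AddChar A ℂ)) = O, ⇑ψ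

variable {G}

lemma repr_smul_of_isInvariant {f : A → ℂ} (hf : IsInvariant G f) (g : G) (ψ : AddChar A ℂ) :
    (AddChar.complexBasis A).repr f (g • ψ) = (AddChar.complexBasis A).repr f ψ := by
  simp only [complexBasis_repr_apply, wInner]
  exact Fintype.sum_equiv (toPerm g⁻¹) _ _ fun x => by simp [smul_addChar_apply, hf g⁻¹ x]

lemma repr_eq_of_mk_eq {f : A → ℂ} (hf : IsInvariant G f) {φ ψ : AddChar A ℂ}
    (h : (⟦φ⟧ : orbitRel.Quotient G (AddChar A ℂ)) = ⟦ψ⟧) :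
    (AddChar.complexBasis A).repr f φ = (AddChar.complexBasis A).repr f ψ := by
  obtain ⟨g, rfl⟩ := Quotient.exact h
  exact repr_smul_of_isInvariant hf g ψ

lemma repr_orbitSum (O : orbitRel.Quotient G (AddChar A ℂ)) (ψ : AddChar A ℂ) :
    (AddChar.complexBasis A).repr (orbitSum G O) ψ = if ⟦ψ⟧ = O then 1 else 0 := by
  have : orbitSum G O = ∑ φ, (if ⟦φ⟧ = O then 1 else 0 : ℂ) • AddChar.complexBasis A φ := by
    simp [orbitSum, Finset.sum_filter, ite_smul]
  rw [this, Module.Basis.repr_sum_self]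

lemma orbitSum_ne_zero (O : orbitRel.Quotient G (AddChar A ℂ)) : orbitSum G O ≠ 0 := by
  intro h
  have := repr_orbitSum O O.out
  rw [h, map_zero, if_pos O.out_eq] at this
  exact zero_ne_one this

lemma isInvariant_orbitSum (O : orbitRel.Quotient G (AddChar A ℂ)) :
    IsInvariant G (orbitSum G O) := by
  intro g x
  simp only [orbitSum, Finset.sum_apply, Finset.sum_filter]
  exact Fintype.sum_equiv (toPerm g⁻¹) _ _ fun ψ => by simp [smul_addChar_apply]

lemma isInvCharacter_orbitSum (O : orbitRel.Quotient G (AddChar A ℂ)) :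
    IsInvCharacter G (orbitSum G O) := by
  refine ⟨isRepCharacter_of_repr_eq_natCast fun ψ => ?_, isInvariant_orbitSum O⟩
  rw [repr_orbitSum]
  split_ifs
  exacts [⟨1, Nat.cast_one.symm⟩, ⟨0, Nat.cast_zero.symm⟩]

lemma isIrrInvCharacter_orbitSum (O : orbitRel.Quotient G (AddChar A ℂ)) :
    IsIrrInvCharacter G (orbitSum G O) := by
  refine ⟨isInvCharacter_orbitSum O, orbitSum_ne_zero O, ?_⟩
  rintro ⟨χ₁, χ₂, ⟨hχ₁, -⟩, ⟨hχ₂, hinv₂⟩, hne₁, hne₂, hsum⟩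
  choose m₁ hm₁ using exists_repr_eq_natCast hχ₁
  choose m₂ hm₂ using exists_repr_eq_natCast hχ₂
  have hm : ∀ ψ, m₁ ψ + m₂ ψ = if ⟦ψ⟧ = O then 1 else 0 := fun ψ => by
    have := repr_orbitSum O ψ
    rw [hsum, map_add, Finsupp.add_apply, hm₁, hm₂] at this
    split_ifs at this ⊢ <;> exact_mod_cast this
  have hmem : ∀ ψ, m₁ ψ + m₂ ψ ≠ 0 → ⟦ψ⟧ = O := fun ψ h => by
    by_contra hψ
    rw [hm, if_neg hψ] at h
    exact h rfl
  obtain ⟨ψ₁, hψ₁⟩ := exists_complexBasis_repr_ne_zero hne₁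
  obtain ⟨ψ₂, hψ₂⟩ := exists_complexBasis_repr_ne_zero hne₂
  rw [hm₁, Nat.cast_ne_zero] at hψ₁
  rw [hm₂, Nat.cast_ne_zero] at hψ₂
  have h₁ := hmem ψ₁ (by omega)
  have h₂ := hmem ψ₂ (by omega)
  -- `ψ₁, ψ₂ ∈ O`, so `m₂ ψ₁ = m₂ ψ₂ > 0`; with `m₁ ψ₁ > 0` this contradicts `m₁ ψ₁ + m₂ ψ₁ = 1`.
  have h₁₂ : m₂ ψ₁ = m₂ ψ₂ := by
    exact_mod_cast (hm₂ ψ₁).symm.trans ((repr_eq_of_mk_eq hinv₂ (h₁.trans h₂.symm)).trans (hm₂ ψ₂))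
  have := hm ψ₁
  rw [if_pos h₁] at this
  omega

lemma exists_eq_orbitSum {χ : A → ℂ} (h : IsIrrInvCharacter G χ) : ∃ O, χ = orbitSum G O := by
  obtain ⟨⟨hχ, hinv⟩, hne, hirr⟩ := h
  obtain ⟨ψ, hψ⟩ := exists_complexBasis_repr_ne_zero hne
  refine ⟨⟦ψ⟧, by_contra fun hχO => hirr ⟨orbitSum G ⟦ψ⟧, χ - orbitSum G ⟦ψ⟧,
    isInvCharacter_orbitSum _, ⟨?_, ?_⟩, orbitSum_ne_zero _, sub_ne_zero.2 hχO,
    (add_sub_cancel _ _).symm⟩⟩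
  · refine isRepCharacter_of_repr_eq_natCast fun φ => ?_
    obtain ⟨m, hm⟩ := exists_repr_eq_natCast hχ φ
    rw [map_sub, Finsupp.sub_apply, repr_orbitSum, hm]
    split_ifs with hφ
    · have hm0 : m ≠ 0 := by
        rintro rfl
        exact hψ (by rw [← repr_eq_of_mk_eq hinv hφ, hm, Nat.cast_zero])
      exact ⟨m - 1, by rw [Nat.cast_sub (Nat.one_le_iff_ne_zero.2 hm0), Nat.cast_one]⟩
    · exact ⟨m, sub_zero _⟩
  · exact (invariantSubmodule G).sub_mem hinv (isInvariant_orbitSum _)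

lemma wInner_orbitSum_eq_zero {O O' : orbitRel.Quotient G (AddChar A ℂ)} (h : O ≠ O') :
    ⟪orbitSum G O, orbitSum G O'⟫_[ℂ] = 0 := by
  have hn : ⟪orbitSum G O, orbitSum G O'⟫ₙ_[ℂ] = 0 := by
    let L : (A → ℂ) →+ ℂ := AddMonoidHom.mk' (fun f => ⟪f, orbitSum G O'⟫ₙ_[ℂ])
      fun _ _ => wInner_add_left _ _ _ _
    refine (map_sum L _ _).trans (Finset.sum_eq_zero fun ψ hψ => ?_)
    rw [AddMonoidHom.mk'_apply, ← complexBasis_repr_apply, repr_orbitSum,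
      if_neg ((Finset.mem_filter.1 hψ).2 ▸ h)]
  rw [wInner_cWeight_eq_smul_wInner_one, smul_eq_zero] at hn
  exact hn.resolve_left (by simp)

lemma wInner_eq_zero_of_isIrrInvCharacter {χ₁ χ₂ : A → ℂ} (h₁ : IsIrrInvCharacter G χ₁)
    (h₂ : IsIrrInvCharacter G χ₂) (hne : χ₁ ≠ χ₂) : ⟪χ₁, χ₂⟫_[ℂ] = 0 := by
  obtain ⟨O₁, rfl⟩ := exists_eq_orbitSum h₁
  obtain ⟨O₂, rfl⟩ := exists_eq_orbitSum h₂
  exact wInner_orbitSum_eq_zero fun h => hne (h ▸ rfl)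

lemma linearIndependent_isIrrInvCharacter :
    LinearIndependent ℂ (fun χ : {χ : A → ℂ // IsIrrInvCharacter G χ} => (χ : A → ℂ)) :=
  linearIndependent_of_ne_zero_of_wInner_one_eq_zero (fun χ => χ.2.2.1) fun χ₁ χ₂ hne =>
    wInner_eq_zero_of_isIrrInvCharacter χ₁.2 χ₂.2 (Subtype.coe_injective.ne hne)

lemma sum_smul_orbitSum {f : A → ℂ} (hf : IsInvariant G f) :
    ∑ O, (AddChar.complexBasis A).repr f O.out • orbitSum G O = f := by
  conv_rhs => rw [← (AddChar.complexBasis A).sum_repr f,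
    ← Finset.sum_fiberwise Finset.univ fun ψ => (⟦ψ⟧ : orbitRel.Quotient G (AddChar A ℂ))]
  refine Finset.sum_congr rfl fun O _ => ?_
  rw [orbitSum, Finset.smul_sum]
  refine Finset.sum_congr rfl fun ψ hψ => ?_
  rw [AddChar.complexBasis_apply,
    repr_eq_of_mk_eq hf ((Finset.mem_filter.1 hψ).2.trans O.out_eq.symm)]

variable (G) in
lemma span_setOf_isIrrInvCharacter :
    Submodule.span ℂ {χ : A → ℂ | IsIrrInvCharacter G χ} = invariantSubmodule G := by
  refine le_antisymm (Submodule.span_le.2 fun χ h => h.1.2) fun f hf => ?_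
  rw [← sum_smul_orbitSum hf]
  exact Submodule.sum_mem _ fun O _ =>
    Submodule.smul_mem _ _ (Submodule.subset_span (isIrrInvCharacter_orbitSum O))

end InvariantCharacters

section Conjugation

variable {F : Type} [Field F] {n : ℕ}

lemma conjM_eq_smul (g : GL (Fin n) F) (x : gl F n) : conjM g x = ConjAct.toConjAct g • x := by
  rw [ConjAct.units_smul_def]
  rfl

lemma invariant_iff_isInvariant {f : gl F n → ℂ} :
    Invariant n f ↔ IsInvariant (ConjAct (GL (Fin n) F)) f := by
  simp only [Invariant, IsInvariant, conjM_eq_smul]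
  exact ConjAct.toConjAct.forall_congr_left

lemma irrInvChar_eq : IrrInvChar (F := F) n = IsIrrInvCharacter (ConjAct (GL (Fin n) F)) := by
  ext χ
  simp only [IrrInvChar, IsIrrInvCharacter, IsInvChar, IsInvCharacter, invariant_iff_isInvariant]
  rfl

lemma invSub_eq : InvSub F n = invariantSubmodule (ConjAct (GL (Fin n) F)) :=
  Submodule.ext fun _ => invariant_iff_isInvariant

lemma inn_eq_wInner [Fintype F] [DecidableEq F] (f g : gl F n → ℂ) :
    inn n f g = (Fintype.card (GL (Fin n) F) : ℂ)⁻¹ * ⟪g, f⟫_[ℂ] := by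
  simp [inn, wInner]

end Conjugation

/-- the irreducible invariant characters of `gl_n(F_q)` are pairwise
orthogonal and form a `ℂ`-basis of the space `C_n` of invariant functions. -/
theorem irr_inv_chars_orthogonal_basis (F : Type) [Field F] [Fintype F] [DecidableEq F]
    (n : ℕ) :
    (∀ χ₁ χ₂ : gl F n → ℂ, IrrInvChar n χ₁ → IrrInvChar n χ₂ → χ₁ ≠ χ₂ →
      inn n χ₁ χ₂ = 0) ∧
    LinearIndependent ℂ (fun χ : {χ : gl F n → ℂ // IrrInvChar n χ} => (χ : gl F n → ℂ)) ∧
    Submodule.span ℂ {χ : gl F n → ℂ | IrrInvChar n χ} = InvSub F n := by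
  rw [irrInvChar_eq, invSub_eq]
  refine ⟨fun χ₁ χ₂ h₁ h₂ hne => ?_, linearIndependent_isIrrInvCharacter,
    span_setOf_isIrrInvCharacter _⟩
  rw [inn_eq_wInner, wInner_eq_zero_of_isIrrInvCharacter h₂ h₁ hne.symm, mul_zero]

end HCPaper
end

section
/- Harish-Chandra restriction is independent of the choice of parabolic (opposite parabolics give the same operator): for all k, l ≥ 1 with k + l = n, every invariant function f ∈ C_n, and all x ∈ gl_k(𝔽_q), y ∈ gl_l(𝔽_q), one has Σ_{u ∈ Mat_{k×l}(𝔽_q)} f([x u; 0 y]) = Σ_{v ∈ Mat_{l×k}(𝔽_q)} f([x 0; v y]), where [x u; 0 y] is the block upper-triangular matrix with diagonal blocks x, y and upper off-diagonal block u, and [x 0; v y] is the block lower-triangular matrix with diagonal blocks x, y and lower off-diagonal block v. -/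
open Matrix BigOperators

/-!
Every square matrix `A` over a field is conjugate to its transpose. On `K[X] ⧸ (m)`, `m` monic,
the form `(u, w) ↦ λ (u * w)`, with `λ` the coefficient of `X ^ (deg m - 1)` in the reduced
representative, is nondegenerate and multiplication by `X` is self-adjoint for it. Summing these
forms over the primary decomposition of the `K[X]`-module `(Kⁿ, A)` gives a nondegenerate form
whose Gram matrix `H` satisfies `Aᵀ * H = H * A`.

Hence an invariant `f` is invariant under transposition, which turns `[x 0; v y]` into
`[xᵀ vᵀ; 0 yᵀ]`. Conjugating by `diag(P, Q)`, where `P x P⁻¹ = xᵀ` and `Q y Q⁻¹ = yᵀ`, maps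
the matrices `[x u; 0 y]` bijectively onto the matrices `[xᵀ u'; 0 yᵀ]`.
-/

open Polynomial

section

variable {K : Type*} [Field K]

theorem AdjoinRoot.exists_separatingLeft_bilinForm_mul_selfAdjoint {m : K[X]} (hm : m.Monic) :
    ∃ B : LinearMap.BilinForm K (AdjoinRoot m),
      B.SeparatingLeft ∧ ∀ a u w, B (a * u) w = B u (a * w) := by
  refine ⟨(LinearMap.mul K _).compr₂ ((lcoeff K (m.natDegree - 1)).comp (modByMonicHom hm)),
    fun u hu => ?_, fun a u w => by
      simp only [LinearMap.compr₂_apply, LinearMap.mul_apply', mul_left_comm, mul_assoc]⟩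
  set g := modByMonicHom hm u
  have hgu : mk m g = u := mk_leftInverse hm u
  by_contra hu0
  have hg : g ≠ 0 := by
    rintro hg
    rw [hg, map_zero] at hgu
    exact hu0 hgu.symm
  have hgm : g.natDegree < m.natDegree := by
    obtain ⟨s, rfl⟩ := mk_surjective u
    exact natDegree_lt_natDegree hg (degree_modByMonic_lt s hm)
  set j := m.natDegree - 1 - g.natDegree
  have hj : m.natDegree - 1 = g.natDegree + j := by omega
  have hreduced : (g * X ^ j).degree < m.degree :=
    degree_lt_degree (by rw [natDegree_mul_X_pow _ hg]; omega)
  -- `u * root m ^ j` is reduced of degree `deg m - 1`, with leading coefficient that of `g`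
  have := hu (root m ^ j)
  rw [← hgu, ← mk_X, ← map_pow, LinearMap.compr₂_apply, LinearMap.mul_apply', ← map_mul] at this
  simp only [LinearMap.coe_comp, Function.comp_apply, modByMonicHom_mk, lcoeff_apply,
    (modByMonic_eq_self_iff hm).2 hreduced, hj, coeff_mul_X_pow] at this
  exact hg (leadingCoeff_eq_zero.1 this)

variable (K) in
def HasXSelfAdjointForm (M : Type*) [AddCommGroup M] [Module K M] [Module K[X] M] : Prop :=
  ∃ B : LinearMap.BilinForm K M,
    B.SeparatingLeft ∧ ∀ u w, B ((X : K[X]) • u) w = B u ((X : K[X]) • w)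

theorem hasXSelfAdjointForm_quotient_span_singleton {b : K[X]} (hb : b ≠ 0) :
    HasXSelfAdjointForm K (K[X] ⧸ K[X] ∙ b) := by
  classical
  obtain ⟨m, hm, hbm⟩ : ∃ m : K[X], m.Monic ∧ Ideal.span {b} = Ideal.span {m} :=
    ⟨normalize b, monic_normalize hb,
      Ideal.span_singleton_eq_span_singleton.2 (associated_normalize b)⟩
  change HasXSelfAdjointForm K (K[X] ⧸ Ideal.span {b})
  rw [hbm]
  obtain ⟨B, hB, hBmul⟩ := AdjoinRoot.exists_separatingLeft_bilinForm_mul_selfAdjoint hm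
  exact ⟨B, hB, hBmul (AdjoinRoot.root m)⟩

theorem HasXSelfAdjointForm.pi {ι : Type*} [Fintype ι] [DecidableEq ι] {M : ι → Type*}
    [∀ i, AddCommGroup (M i)] [∀ i, Module K (M i)] [∀ i, Module K[X] (M i)]
    (h : ∀ i, HasXSelfAdjointForm K (M i)) : HasXSelfAdjointForm K (∀ i, M i) := by
  choose B hB hBX using h
  refine ⟨∑ i, (B i).compl₁₂ (LinearMap.proj i) (LinearMap.proj i), fun u hu => ?_,
    fun u w => by simp [hBX]⟩
  funext i
  refine hB i (u i) fun w => ?_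
  have := hu (Pi.single i w)
  simp only [LinearMap.coe_sum, Finset.sum_apply, LinearMap.compl₁₂_apply, LinearMap.coe_proj,
    Function.eval] at this
  rwa [Fintype.sum_eq_single i fun c hc => by rw [Pi.single_eq_of_ne hc, map_zero],
    Pi.single_eq_same] at this

theorem HasXSelfAdjointForm.of_linearEquiv {M N : Type*} [AddCommGroup M] [Module K M]
    [Module K[X] M] [IsScalarTower K K[X] M] [AddCommGroup N] [Module K N] [Module K[X] N]
    [IsScalarTower K K[X] N] (e : M ≃ₗ[K[X]] N) (h : HasXSelfAdjointForm K N) :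
    HasXSelfAdjointForm K M := by
  obtain ⟨B, hB, hBX⟩ := h
  let e' := e.restrictScalars K
  refine ⟨B.compl₁₂ e'.toLinearMap e'.toLinearMap, fun u hu => ?_,
    fun u w => by simp [e', hBX]⟩
  exact e.injective ((hB (e u) fun w => by simpa [e'] using hu (e.symm w)).trans (map_zero e).symm)

theorem hasXSelfAdjointForm_aeval' {V : Type*} [AddCommGroup V] [Module K V]
    [FiniteDimensional K V] (φ : Module.End K V) :
    HasXSelfAdjointForm K (Module.AEval' φ) := by
  classical
  obtain ⟨ι, _, p, hp, e, ⟨E⟩⟩ := Module.equiv_directSum_of_isTorsion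
    (Module.AEval.isTorsion_of_finiteDimensional K V φ)
  exact .of_linearEquiv (E.trans (DirectSum.linearEquivFunOnFintype _ _ _))
    (.pi fun i => hasXSelfAdjointForm_quotient_span_singleton (pow_ne_zero _ (hp i).ne_zero))

theorem Matrix.exists_conj_eq_transpose {n : Type*} [Fintype n] [DecidableEq n]
    (A : Matrix n n K) : ∃ P : GL n K, (P : Matrix n n K) * A * (P⁻¹ : GL n K) = Aᵀ := by
  set φ := toLin' A
  obtain ⟨B, hB, hBX⟩ := hasXSelfAdjointForm_aeval' φ
  set B' := B.compl₁₂ (Module.AEval'.of φ).toLinearMap (Module.AEval'.of φ).toLinearMap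
  set H := LinearMap.toMatrix₂' K B'
  have hHB : toLinearMap₂' K H = B' := toLinearMap₂'_toMatrix' B'
  have hadj : Aᵀ * H = H * A := by
    rw [← Matrix.IsAdjointPair, ← isAdjointPair_toLinearMap₂', hHB]
    intro u w
    change B (Module.AEval'.of φ (φ u)) (Module.AEval'.of φ w) =
      B (Module.AEval'.of φ u) (Module.AEval'.of φ (φ w))
    rw [← Module.AEval'.X_smul_of, ← Module.AEval'.X_smul_of, hBX]
  have hH : IsUnit H := by
    rw [isUnit_iff_isUnit_det, isUnit_iff_ne_zero,
      ← LinearMap.separatingLeft_toLinearMap₂'_iff_det_ne_zero, hHB]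
    intro u hu
    have := hB (Module.AEval'.of φ u) fun w => by
      simpa [B'] using hu ((Module.AEval'.of φ).symm w)
    simpa using this
  refine ⟨hH.unit, ?_⟩
  rw [coe_units_inv, IsUnit.unit_spec, ← hadj, Matrix.mul_assoc,
    mul_nonsing_inv _ ((isUnit_iff_isUnit_det H).1 hH), Matrix.mul_one]

end

def Matrix.GeneralLinearGroup.mulLeftRightEquiv {R m n : Type*} [CommRing R] [Fintype m]
    [DecidableEq m] [Fintype n] [DecidableEq n] (g₁ : GL m R) (g₂ : GL n R) :
    Matrix m n R ≃ Matrix m n R where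
  toFun u := (g₁ : Matrix m m R) * u * ((g₂⁻¹ : GL n R) : Matrix n n R)
  invFun u := ((g₁⁻¹ : GL m R) : Matrix m m R) * u * (g₂ : Matrix n n R)
  left_inv u := by simp [Matrix.mul_assoc]
  right_inv u := by simp [Matrix.mul_assoc]

namespace HCPaper

variable {F : Type} [Field F] {k l : ℕ}

theorem Invariant.apply_transpose {n : ℕ} {f : gl F n → ℂ} (hf : Invariant n f) (m : gl F n) :
    f mᵀ = f m := by
  obtain ⟨P, hP⟩ := m.exists_conj_eq_transpose
  rw [← hP]
  exact hf P m

theorem transpose_blt (x : gl F k) (v : Matrix (Fin l) (Fin k) F) (y : gl F l) :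
    (blt k l x v y)ᵀ = but k l xᵀ vᵀ yᵀ := by
  rw [blt, but, transpose_reindex, fromBlocks_transpose, transpose_zero]

def fromBlocksGL (g₁ : GL (Fin k) F) (g₂ : GL (Fin l) F) : GL (Fin (k + l)) F :=
  Units.map (reindexAlgEquiv F F finSumFinEquiv).toMonoidHom
    ⟨fromBlocks g₁ 0 0 g₂, fromBlocks ↑g₁⁻¹ 0 0 ↑g₂⁻¹,
      by simp [fromBlocks_multiply], by simp [fromBlocks_multiply]⟩

theorem conjM_fromBlocksGL_but (g₁ : GL (Fin k) F) (g₂ : GL (Fin l) F) (x : gl F k)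
    (u : Matrix (Fin k) (Fin l) F) (y : gl F l) :
    conjM (fromBlocksGL g₁ g₂) (but k l x u y) =
      but k l (conjM g₁ x) ((g₁ : gl F k) * u * ((g₂⁻¹ : GL (Fin l) F) : gl F l))
        (conjM g₂ y) := by
  simp [conjM, fromBlocksGL, but, fromBlocks_multiply]

theorem Invariant.sum_but_conjM [Fintype F] {f : gl F (k + l) → ℂ} (hf : Invariant (k + l) f)
    (g₁ : GL (Fin k) F) (g₂ : GL (Fin l) F) (x : gl F k) (y : gl F l) :
    ∑ u, f (but k l (conjM g₁ x) u (conjM g₂ y)) = ∑ u, f (but k l x u y) := by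
  refine (Fintype.sum_equiv (GeneralLinearGroup.mulLeftRightEquiv g₁ g₂) _ _ fun u => ?_).symm
  rw [← hf (fromBlocksGL g₁ g₂), conjM_fromBlocksGL_but]
  rfl

theorem HCres_parabolic_independent_general (F : Type) [Field F] [Fintype F]
    (k l : ℕ)
    (f : gl F (k + l) → ℂ) (hf : Invariant (k + l) f)
    (x : gl F k) (y : gl F l) :
    ∑ u : Matrix (Fin k) (Fin l) F, f (but k l x u y) =
      ∑ v : Matrix (Fin l) (Fin k) F, f (blt k l x v y) := by
  obtain ⟨P, hP⟩ := x.exists_conj_eq_transpose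
  obtain ⟨Q, hQ⟩ := y.exists_conj_eq_transpose
  calc ∑ u, f (but k l x u y) = ∑ u, f (but k l xᵀ u yᵀ) := by
        rw [← hP, ← hQ]; exact (hf.sum_but_conjM P Q x y).symm
    _ = ∑ v, f (blt k l x v y) :=
        Fintype.sum_equiv (transposeAddEquiv _ _ F).toEquiv _ _ fun u => by
          rw [← hf.apply_transpose (blt k l x _ y), transpose_blt]
          rfl

/-- Harish-Chandra restriction is independent of the choice of parabolic. -/
theorem HCres_parabolic_independent (F : Type) [Field F] [Fintype F] [DecidableEq F]
    (k l : ℕ) (hk : 1 ≤ k) (hl : 1 ≤ l)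
    (f : gl F (k + l) → ℂ) (hf : Invariant (k + l) f)
    (x : gl F k) (y : gl F l) :
    ∑ u : Matrix (Fin k) (Fin l) F, f (but k l x u y) =
      ∑ v : Matrix (Fin l) (Fin k) F, f (blt k l x v y) :=
  HCres_parabolic_independent_general F k l f hf x y

end HCPaper
end
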